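/- arXiv:2312.04419 — 2 statements merged into one kernel-verified Lean document; each statement's English description precedes it below -/
import Mathlib

section
/- For any nonempty finite set I of nonnegative integers, there exists a closed convex set S ⊆ ℝᵈ with d = max I whose facial dimension signature is exactly I; moreover S can be chosen as the solution set of |I| − 1 convex quadratic inequalities, and if 0 ∈ I, S can be chosen compact. -/
/-!
Enumerate `I = {n₀ < ⋯ < n_k}`, so that `d = n_k`, and let `S` be the set of `x ∈ ℝᵈ` whose tail
`(x_{n_j}, …, x_{d-1})` has squared norm at most `k - j` for every `j < k`: these are `k` convex
quadratic inequalities, and `S` is bounded when `n₀ = 0`.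

More generally, let `T(m, v)` (`nestedCylinder n m v`) be the set of points whose tail from `n_m`
equals `v` and whose tail from `n_j` lies within `√(m - j)` of `v` for `j < m`; it spans an affine
space of dimension `n_m`. A face of `T(m, v)` either contains a point satisfying all its
inequalities strictly, and is then all of `T(m, v)`, or makes some inequality `j` tight. In the
second case strict convexity of the Euclidean norm makes the tail from `n_j` a constant `v'` on the
face, and by Pythagoras the points of `T(m, v)` with that tail form `T(j, v')`, of which the face is
again a face. Conversely, fixing the tail from `n_m` to a point of the sphere of radius `√(k - m)`
cuts out a face `T(m, v')` of `S` of dimension `n_m`.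
-/

open Set Metric RealInnerProductSpace

variable {E : Type*} [NormedAddCommGroup E] [NormedSpace ℝ E]

/-- A face of a convex set: a convex subset `F` of `C` such that any open segment of `C`
meeting `F` has both endpoints in `F`. -/
def IsFace (C F : Set E) : Prop := Convex ℝ F ∧ IsExtreme ℝ C F

/-- Dimension of a convex set: the dimension of its affine hull. -/
noncomputable def sdim (S : Set E) : ℕ := Module.finrank ℝ (affineSpan ℝ S).direction

/-- The facial dimension signature: the set of dimensions of nonempty faces. -/
def faceDimSig (C : Set E) : Set ℕ :=
  {d | ∃ F : Set E, IsFace C F ∧ F.Nonempty ∧ sdim F = d}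

/-- The minimal face of `C` containing `x`. -/
def minFace (C : Set E) (x : E) : Set E := ⋂₀ {F | IsFace C F ∧ x ∈ F}

/-- `S` is the solution set of `k` convex quadratic inequalities. -/
def QuadRep {N : ℕ} (S : Set (EuclideanSpace ℝ (Fin N))) (k : ℕ) : Prop :=
  ∃ (Q : Fin k → (EuclideanSpace ℝ (Fin N) →ₗ[ℝ] EuclideanSpace ℝ (Fin N)))
    (a : Fin k → EuclideanSpace ℝ (Fin N)) (α : Fin k → ℝ),
    (∀ j x, (0 : ℝ) ≤ ⟪Q j x, x⟫) ∧
    (∀ j x y, ⟪Q j x, y⟫ = ⟪x, Q j y⟫) ∧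
    S = {x | ∀ j, ⟪Q j x, x⟫ + 2 * ⟪a j, x⟫ + α j ≤ 0}


open Filter Topology

section ConvexGeometry

lemma IsExtreme.mem_of_add_smul_sub_mem {C F : Set E} (hF : IsExtreme ℝ C F) {x y : E}
    (hx : x ∈ F) (hy : y ∈ C) {t : ℝ} (ht : 0 < t) (hz : x + t • (x - y) ∈ C) : y ∈ F := by
  refine hF.left_mem_of_mem_openSegment hy hz hx
    ⟨t / (1 + t), 1 / (1 + t), by positivity, by positivity, ?_, ?_⟩
  · field_simp; ring
  · match_scalars
    · field_simp; ring
    · field_simp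

lemma Convex.exists_forall_lt_of_convexOn {ι : Type*} (s : Finset ι) {F : Set E}
    (hF : Convex ℝ F) (hne : F.Nonempty) {f : ι → E → ℝ} {c : ι → ℝ}
    (hf : ∀ i ∈ s, ConvexOn ℝ F (f i)) (hle : ∀ i ∈ s, ∀ x ∈ F, f i x ≤ c i)
    (hlt : ∀ i ∈ s, ∃ x ∈ F, f i x < c i) : ∃ x ∈ F, ∀ i ∈ s, f i x < c i := by
  classical
  induction s using Finset.induction_on with
  | empty => exact hne.elim fun x hx => ⟨x, hx, by simp⟩
  | insert i s _ ih =>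
    obtain ⟨x, hxF, hx⟩ := ih (fun j hj => hf j (Finset.mem_insert_of_mem hj))
      (fun j hj => hle j (Finset.mem_insert_of_mem hj))
      (fun j hj => hlt j (Finset.mem_insert_of_mem hj))
    obtain ⟨y, hyF, hy⟩ := hlt i (Finset.mem_insert_self i s)
    refine ⟨(1 / 2 : ℝ) • x + (1 / 2 : ℝ) • y,
      hF hxF hyF (by norm_num : (0 : ℝ) ≤ 1 / 2) (by norm_num : (0 : ℝ) ≤ 1 / 2) (by norm_num),
      fun j hj => ?_⟩
    have hmid := (hf j hj).2 hxF hyF (by norm_num : (0 : ℝ) ≤ 1 / 2)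
      (by norm_num : (0 : ℝ) ≤ 1 / 2) (by norm_num)
    have hxj := hle j hj x hxF
    have hyj := hle j hj y hyF
    simp only [smul_eq_mul] at hmid
    rcases Finset.mem_insert.1 hj with rfl | hj
    · linarith
    · linarith [hx j hj]

variable {G : Type*} [NormedAddCommGroup G] [NormedSpace ℝ G] [StrictConvexSpace ℝ G]

lemma Convex.map_eq_of_forall_norm_sub_eq {F : Set E} (hF : Convex ℝ F) (f : E →ₗ[ℝ] G)
    {c : G} {r : ℝ} (h : ∀ x ∈ F, ‖f x - c‖ = r) {x y : E} (hx : x ∈ F) (hy : y ∈ F) :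
    f x = f y := by
  by_contra hne
  have hlt := norm_combo_lt_of_ne (h x hx).le (h y hy).le (fun e => hne (sub_left_injective e))
    (by norm_num : (0 : ℝ) < 1 / 2) (by norm_num : (0 : ℝ) < 1 / 2) (by norm_num)
  have hmid := h _
    (hF hx hy (by norm_num : (0 : ℝ) ≤ 1 / 2) (by norm_num : (0 : ℝ) ≤ 1 / 2) (by norm_num))
  rw [map_add, map_smul, map_smul,
    show (1 / 2 : ℝ) • f x + (1 / 2 : ℝ) • f y - c
      = (1 / 2 : ℝ) • (f x - c) + (1 / 2 : ℝ) • (f y - c) by module] at hmid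
  exact hlt.ne hmid

lemma isExtreme_sep_map_eq {C : Set E} (f : E →ₗ[ℝ] G) {w : G} (hC : ∀ x ∈ C, ‖f x‖ ≤ ‖w‖) :
    IsExtreme ℝ C {x ∈ C | f x = w} := by
  refine ⟨fun x hx => hx.1, ?_⟩
  rintro x₁ hx₁ x₂ hx₂ x ⟨-, hxw⟩ ⟨a, b, ha, hb, hab, rfl⟩
  rw [map_add, map_smul, map_smul] at hxw
  have h12 : f x₁ = f x₂ := by
    by_contra hne
    exact (norm_combo_lt_of_ne (hC x₁ hx₁) (hC x₂ hx₂) hne ha hb hab).ne (by rw [hxw])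
  rw [← h12, ← add_smul, hab, one_smul] at hxw
  exact ⟨hx₁, hxw⟩

end ConvexGeometry

section TailProjection

variable {d : ℕ}

def tailProj (t : ℕ) : EuclideanSpace ℝ (Fin d) →ₗ[ℝ] EuclideanSpace ℝ (Fin d) where
  toFun x := WithLp.toLp 2 fun i => if t ≤ i.val then x i else 0
  map_add' x y := by ext i; simp only [PiLp.add_apply]; split_ifs <;> simp
  map_smul' c x := by ext i; simp only [PiLp.smul_apply]; split_ifs <;> simp

variable {t t' : ℕ} {x y : EuclideanSpace ℝ (Fin d)}

@[simp]
lemma tailProj_apply (i : Fin d) : tailProj t x i = if t ≤ i.val then x i else 0 := rfl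

lemma tailProj_tailProj : tailProj t (tailProj t' x) = tailProj (max t t') x := by
  ext i
  simp only [tailProj_apply, max_le_iff]
  split_ifs <;> tauto

lemma tailProj_tailProj_of_le (h : t ≤ t') : tailProj t (tailProj t' x) = tailProj t' x := by
  rw [tailProj_tailProj, max_eq_right h]

lemma tailProj_tailProj_of_ge (h : t' ≤ t) : tailProj t (tailProj t' x) = tailProj t x := by
  rw [tailProj_tailProj, max_eq_left h]

lemma tailProj_zero : tailProj 0 x = x := by
  ext i; simp

lemma tailProj_eq_zero_of_le (h : d ≤ t) : tailProj t x = 0 := by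
  ext i
  simp [show ¬t ≤ i.val by omega]

lemma tailProj_single (i : Fin d) (c : ℝ) :
    tailProj t (EuclideanSpace.single i c) =
      if t ≤ i.val then EuclideanSpace.single i c else 0 := by
  ext j
  by_cases hj : j = i
  · subst hj; split_ifs <;> simp_all
  · split_ifs <;> simp [hj]

lemma inner_tailProj_left : ⟪tailProj t x, y⟫ = ⟪x, tailProj t y⟫ := by
  simp only [PiLp.inner_apply, RCLike.inner_apply, conj_trivial, tailProj_apply]
  refine Finset.sum_congr rfl fun i _ => ?_
  split_ifs <;> simp

lemma inner_tailProj_self : ⟪tailProj t x, x⟫ = ‖tailProj t x‖ ^ 2 := by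
  rw [← real_inner_self_eq_norm_sq, inner_tailProj_left, inner_tailProj_left, tailProj_tailProj,
    max_self]

lemma norm_tailProj_le : ‖tailProj t x‖ ≤ ‖x‖ := by
  have h := real_inner_le_norm (tailProj t x) x
  rw [inner_tailProj_self, sq] at h
  nlinarith [norm_nonneg (tailProj t x), norm_nonneg x]

lemma norm_add_sq_of_tailProj {a b : EuclideanSpace ℝ (Fin d)} (ha : tailProj t a = 0)
    (hb : tailProj t b = b) : ‖a + b‖ ^ 2 = ‖a‖ ^ 2 + ‖b‖ ^ 2 := by
  have h : ⟪a, b⟫ = 0 := by rw [← hb, ← inner_tailProj_left, ha, inner_zero_left]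
  rw [norm_add_sq_real, h]
  ring

def kerTailProjEquiv (t : ℕ) :
    LinearMap.ker (tailProj (d := d) t) ≃ₗ[ℝ] ({i : Fin d // i.val < t} → ℝ) where
  toFun x i := (x : EuclideanSpace ℝ (Fin d)) i
  map_add' _ _ := rfl
  map_smul' _ _ := rfl
  invFun y := ⟨WithLp.toLp 2 fun i => if h : i.val < t then y ⟨i, h⟩ else 0, by
    ext i
    simp only [tailProj_apply]
    split_ifs <;> first | omega | rfl⟩
  left_inv x := by
    ext i
    have hx := congrArg (· i) (LinearMap.mem_ker.1 x.2)
    simp only [tailProj_apply] at hx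
    split_ifs at hx ⊢ <;> first | omega | simp_all
  right_inv y := by
    ext i
    simp [i.2]

lemma finrank_ker_tailProj : Module.finrank ℝ (LinearMap.ker (tailProj (d := d) t)) = min d t := by
  rw [(kerTailProjEquiv t).finrank_eq, Module.finrank_fintype_fun_eq_card, Fintype.card_subtype,
    Fin.card_filter_val_lt]

end TailProjection

section NestedCylinder

variable {d : ℕ} {n : ℕ → ℕ} {m : ℕ} {v x : EuclideanSpace ℝ (Fin d)}

def nestedCylinder (n : ℕ → ℕ) (m : ℕ) (v : EuclideanSpace ℝ (Fin d)) :
    Set (EuclideanSpace ℝ (Fin d)) :=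
  {x | tailProj (n m) x = v ∧ ∀ j < m, ‖tailProj (n j) x - v‖ ^ 2 ≤ (m : ℝ) - j}

lemma convexOn_norm_tailProj_sub_sq (t : ℕ) (v : EuclideanSpace ℝ (Fin d)) :
    ConvexOn ℝ univ fun x => ‖tailProj t x - v‖ ^ 2 := by
  have h := (convexOn_norm convex_univ).comp_affineMap
    ((tailProj t).toAffineMap - AffineMap.const ℝ (EuclideanSpace ℝ (Fin d)) v)
  exact h.pow (fun _ _ => norm_nonneg _) 2

lemma convex_nestedCylinder : Convex ℝ (nestedCylinder n m v) := by
  intro x hx y hy a b ha hb hab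
  refine ⟨by rw [map_add, map_smul, map_smul, hx.1, hy.1, ← add_smul, hab, one_smul],
    fun j hj => ?_⟩
  exact ((convexOn_norm_tailProj_sub_sq (n j) v).convex_le ((m : ℝ) - j)
    ⟨trivial, hx.2 j hj⟩ ⟨trivial, hy.2 j hj⟩ ha hb hab).2

lemma isClosed_nestedCylinder : IsClosed (nestedCylinder n m v) := by
  have hP : ∀ t, Continuous (tailProj (d := d) t) :=
    fun t => LinearMap.continuous_of_finiteDimensional _
  simp only [nestedCylinder, ofPred_and, ofPred_forall]
  exact (isClosed_eq (hP _) continuous_const).inter <| isClosed_iInter fun j =>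
    isClosed_iInter fun _ => isClosed_le (((hP _).sub continuous_const).norm.pow 2)
      continuous_const

lemma isCompact_nestedCylinder (h0 : n 0 = 0) : IsCompact (nestedCylinder n m v) := by
  rcases Nat.eq_zero_or_pos m with rfl | hm
  · have : nestedCylinder n 0 v = {v} := by ext x; simp [nestedCylinder, h0, tailProj_zero]
    exact this ▸ isCompact_singleton
  · refine (isCompact_closedBall v √m).of_isClosed_subset isClosed_nestedCylinder fun x hx => ?_
    have h := hx.2 0 hm
    rw [h0, tailProj_zero, Nat.cast_zero, sub_zero] at h
    rw [mem_closedBall, dist_eq_norm]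
    exact Real.le_sqrt_of_sq_le h

lemma add_mem_nestedCylinder (hn : Monotone n) (hv : tailProj (n m) v = v)
    {w : EuclideanSpace ℝ (Fin d)} (hw : tailProj (n m) w = 0) (hw1 : ‖w‖ ≤ 1) :
    v + w ∈ nestedCylinder n m v := by
  refine ⟨by rw [map_add, hv, hw, add_zero], fun j hj => ?_⟩
  rw [map_add, ← hv, tailProj_tailProj_of_le (hn hj.le), hv, add_sub_cancel_left]
  have h1 : ‖tailProj (n j) w‖ ≤ 1 := norm_tailProj_le.trans hw1
  have h2 : (j : ℝ) + 1 ≤ m := by exact_mod_cast hj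
  nlinarith [norm_nonneg (tailProj (n j) w)]

lemma self_mem_nestedCylinder (hn : Monotone n) (hv : tailProj (n m) v = v) :
    v ∈ nestedCylinder n m v := by
  simpa using add_mem_nestedCylinder hn hv (map_zero _) (by simp)

lemma direction_affineSpan_nestedCylinder (hn : Monotone n) (hv : tailProj (n m) v = v) :
    (affineSpan ℝ (nestedCylinder n m v)).direction = LinearMap.ker (tailProj (n m)) := by
  apply le_antisymm
  · have hle : affineSpan ℝ (nestedCylinder n m v)
        ≤ AffineSubspace.mk' v (LinearMap.ker (tailProj (n m))) := by
      refine affineSpan_le.2 fun x hx => ?_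
      rw [SetLike.mem_coe, AffineSubspace.mem_mk', LinearMap.mem_ker, vsub_eq_sub, map_sub, hx.1,
        hv, sub_self]
    simpa using AffineSubspace.direction_le hle
  · intro w hw
    set c : ℝ := (‖w‖ + 1)⁻¹
    have hc : 0 < c := by positivity
    have hcw : ‖c • w‖ ≤ 1 := by
      rw [norm_smul, Real.norm_of_nonneg hc.le, inv_mul_le_iff₀ (by positivity)]
      linarith
    have hmem := AffineSubspace.vsub_mem_direction
      (subset_affineSpan ℝ _ (add_mem_nestedCylinder hn hv
        (by rw [map_smul, LinearMap.mem_ker.1 hw, smul_zero]) hcw))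
      (subset_affineSpan ℝ _ (self_mem_nestedCylinder hn hv))
    rw [vsub_eq_sub, add_sub_cancel_left] at hmem
    exact (Submodule.smul_mem_iff _ hc.ne').1 hmem

lemma sdim_nestedCylinder (hn : Monotone n) (hd : n m ≤ d) (hv : tailProj (n m) v = v) :
    sdim (nestedCylinder n m v) = n m := by
  rw [sdim, direction_affineSpan_nestedCylinder hn hv, finrank_ker_tailProj, min_eq_right hd]

lemma tailProj_mem_nestedCylinder (hn : Monotone n) {j : ℕ} (hj : j < m)
    (hx : x ∈ nestedCylinder n m v) : tailProj (n j) x ∈ nestedCylinder n m v := by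
  refine ⟨by rw [tailProj_tailProj_of_ge (hn hj.le), hx.1], fun i hi => ?_⟩
  rcases lt_or_ge i j with hij | hji
  · rw [tailProj_tailProj_of_le (hn hij.le)]
    have : (i : ℝ) ≤ j := by exact_mod_cast hij.le
    linarith [hx.2 j hj]
  · rw [tailProj_tailProj_of_ge (hn hji)]
    exact hx.2 i hi

lemma nestedCylinder_eq_sep (hn : Monotone n) {j : ℕ} (hj : j ≤ m)
    {v' : EuclideanSpace ℝ (Fin d)} (hv' : v' ∈ nestedCylinder n m v)
    (hv'j : tailProj (n j) v' = v') (hnorm : ‖v' - v‖ ^ 2 = (m : ℝ) - j) :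
    nestedCylinder n j v' = {x ∈ nestedCylinder n m v | tailProj (n j) x = v'} := by
  have hvj : tailProj (n j) v = v := by rw [← hv'.1, tailProj_tailProj_of_le (hn hj)]
  have hpyth : ∀ x, tailProj (n j) x = v' → ∀ i < j,
      ‖tailProj (n i) x - v‖ ^ 2 = ‖tailProj (n i) x - v'‖ ^ 2 + ((m : ℝ) - j) := by
    intro x hx i hi
    rw [← hnorm, ← norm_add_sq_of_tailProj (t := n j), sub_add_sub_cancel]
    · rw [map_sub, tailProj_tailProj_of_ge (hn hi.le), hx, hv'j, sub_self]
    · rw [map_sub, hv'j, hvj]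
  ext x
  constructor
  · rintro ⟨hxj, hx⟩
    refine ⟨⟨by rw [← tailProj_tailProj_of_ge (hn hj), hxj, hv'.1], fun i hi => ?_⟩, hxj⟩
    rcases lt_or_ge i j with hij | hji
    · linarith [hpyth x hxj i hij, hx i hij]
    · rw [← tailProj_tailProj_of_ge (hn hji), hxj]
      exact hv'.2 i hi
  · rintro ⟨hx, hxj⟩
    exact ⟨hxj, fun i hi => by linarith [hpyth x hxj i hi, hx.2 i (hi.trans_le hj)]⟩

end NestedCylinder

section Faces

variable {d : ℕ} {n : ℕ → ℕ} {k m : ℕ} {v x y : EuclideanSpace ℝ (Fin d)}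
  {F : Set (EuclideanSpace ℝ (Fin d))}

lemma eventually_add_smul_sub_mem_nestedCylinder (hx : tailProj (n m) x = v)
    (hlt : ∀ j < m, ‖tailProj (n j) x - v‖ ^ 2 < (m : ℝ) - j) (hy : tailProj (n m) y = v) :
    ∀ᶠ s in 𝓝 (0 : ℝ), x + s • (x - y) ∈ nestedCylinder n m v := by
  have hcont : ∀ j, Continuous fun s : ℝ => ‖tailProj (n j) (x + s • (x - y)) - v‖ ^ 2 :=
    fun j => (((LinearMap.continuous_of_finiteDimensional _).comp
      (continuous_const.add (continuous_id.smul continuous_const))).sub continuous_const).norm.pow 2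
  have hall : ∀ᶠ s in 𝓝 (0 : ℝ), ∀ j ∈ Finset.range m,
      ‖tailProj (n j) (x + s • (x - y)) - v‖ ^ 2 < (m : ℝ) - j :=
    (eventually_all_finset _).2 fun j hj => (hcont j).continuousAt.eventually_lt
      continuousAt_const (by simpa using hlt j (Finset.mem_range.1 hj))
  filter_upwards [hall] with s hs
  exact ⟨by rw [map_add, map_smul, map_sub, hx, hy, sub_self, smul_zero, add_zero],
    fun j hj => (hs j (Finset.mem_range.2 hj)).le⟩

lemma IsFace.eq_nestedCylinder (hF : IsFace (nestedCylinder n m v) F) (hne : F.Nonempty)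
    (h : ∀ j < m, ∃ x ∈ F, ‖tailProj (n j) x - v‖ ^ 2 < (m : ℝ) - j) :
    F = nestedCylinder n m v := by
  obtain ⟨x, hxF, hx⟩ := hF.1.exists_forall_lt_of_convexOn (Finset.range m) hne
    (fun j _ => (convexOn_norm_tailProj_sub_sq (n j) v).subset (subset_univ _) hF.1)
    (fun j hj y hy => (hF.2.1 hy).2 j (Finset.mem_range.1 hj))
    (fun j hj => h j (Finset.mem_range.1 hj))
  refine hF.2.1.antisymm fun y hy => ?_
  obtain ⟨s, hs, hspos⟩ := ((eventually_add_smul_sub_mem_nestedCylinder (hF.2.1 hxF).1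
    (fun j hj => hx j (Finset.mem_range.2 hj)) hy.1).filter_mono nhdsWithin_le_nhds).and
    (self_mem_nhdsWithin : ∀ᶠ s in 𝓝[>] (0 : ℝ), 0 < s) |>.exists
  exact hF.2.mem_of_add_smul_sub_mem hxF hy hspos hs

lemma IsFace.exists_isFace_nestedCylinder (hn : Monotone n)
    (hF : IsFace (nestedCylinder n m v) F) {x₀ : EuclideanSpace ℝ (Fin d)} (hx₀ : x₀ ∈ F)
    {j : ℕ} (hj : j < m) (htight : ∀ x ∈ F, (m : ℝ) - j ≤ ‖tailProj (n j) x - v‖ ^ 2) :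
    ∃ v', tailProj (n j) v' = v' ∧ IsFace (nestedCylinder n j v') F := by
  have hsub := hF.2.1
  have heq : ∀ x ∈ F, ‖tailProj (n j) x - v‖ ^ 2 = (m : ℝ) - j :=
    fun x hx => le_antisymm ((hsub hx).2 j hj) (htight x hx)
  have hconst : ∀ x ∈ F, tailProj (n j) x = tailProj (n j) x₀ := fun x hx =>
    hF.1.map_eq_of_forall_norm_sub_eq _ (r := √((m : ℝ) - j))
      (fun y hy => by rw [← heq y hy, Real.sqrt_sq (norm_nonneg _)]) hx hx₀
  have hidem : tailProj (n j) (tailProj (n j) x₀) = tailProj (n j) x₀ :=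
    tailProj_tailProj_of_le le_rfl
  have hslice := nestedCylinder_eq_sep hn hj.le (tailProj_mem_nestedCylinder hn hj (hsub hx₀))
    hidem (heq x₀ hx₀)
  refine ⟨tailProj (n j) x₀, hidem, hF.1, hF.2.mono ?_ ?_⟩
  · rw [hslice]
    exact sep_subset _ _
  · rw [hslice]
    exact fun x hx => ⟨hsub hx, hconst x hx⟩

lemma IsFace.sdim_mem_image_of_nestedCylinder (hn : Monotone n) (hd : n m ≤ d)
    (hv : tailProj (n m) v = v) (hF : IsFace (nestedCylinder n m v) F) (hne : F.Nonempty) :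
    sdim F ∈ n '' Iic m := by
  induction m using Nat.strong_induction_on generalizing v with
  | _ m ih =>
  by_cases h : ∀ j < m, ∃ x ∈ F, ‖tailProj (n j) x - v‖ ^ 2 < (m : ℝ) - j
  · exact ⟨m, self_mem_Iic, by rw [hF.eq_nestedCylinder hne h, sdim_nestedCylinder hn hd hv]⟩
  · push Not at h
    obtain ⟨j, hj, htight⟩ := h
    obtain ⟨v', hv', hF'⟩ := hF.exists_isFace_nestedCylinder hn hne.some_mem hj htight
    obtain ⟨i, hi, hdim⟩ := ih j hj ((hn hj.le).trans hd) hv' hF'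
    exact ⟨i, (mem_Iic.1 hi).trans hj.le, hdim⟩

lemma exists_isFace_nestedCylinder_sdim_eq (hn : Monotone n) (hs : StrictMonoOn n (Iic k))
    (hk : n k = d) (hm : m ≤ k) :
    ∃ F, IsFace (nestedCylinder n k (0 : EuclideanSpace ℝ (Fin d))) F ∧ F.Nonempty ∧
      sdim F = n m := by
  rcases hm.eq_or_lt with rfl | hm
  · exact ⟨_, ⟨convex_nestedCylinder, IsExtreme.rfl⟩,
      ⟨0, self_mem_nestedCylinder hn (map_zero _)⟩, sdim_nestedCylinder hn hk.le (map_zero _)⟩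
  have hmd : n m < d := hk ▸ hs hm.le self_mem_Iic hm
  set v : EuclideanSpace ℝ (Fin d) :=
    √((k : ℝ) - m) • EuclideanSpace.single (⟨n m, hmd⟩ : Fin d) 1
  have hkm : (0 : ℝ) ≤ k - m := sub_nonneg.2 (by exact_mod_cast hm.le)
  have hvm : tailProj (n m) v = v := by rw [map_smul, tailProj_single, if_pos le_rfl]
  have hnorm : ‖v‖ ^ 2 = (k : ℝ) - m := by
    rw [norm_smul, PiLp.norm_single, norm_one, mul_one,
      Real.norm_of_nonneg (Real.sqrt_nonneg _), Real.sq_sqrt hkm]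
  have hvk : v ∈ nestedCylinder n k 0 := by
    refine ⟨tailProj_eq_zero_of_le hk.ge, fun j hj => ?_⟩
    rw [sub_zero]
    rcases le_or_gt j m with hjm | hmj
    · have : (j : ℝ) ≤ m := by exact_mod_cast hjm
      rw [← hvm, tailProj_tailProj_of_le (hn hjm), hvm, hnorm]
      linarith
    · rw [map_smul, tailProj_single, if_neg (hs hm.le hj.le hmj).not_ge, smul_zero, norm_zero]
      have : (j : ℝ) < k := by exact_mod_cast hj
      nlinarith
  have hslice := nestedCylinder_eq_sep hn hm.le hvk hvm (by rw [sub_zero, hnorm])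
  refine ⟨nestedCylinder n m v, ⟨convex_nestedCylinder, ?_⟩, ⟨v, self_mem_nestedCylinder hn hvm⟩,
    sdim_nestedCylinder hn ((hn hm.le).trans hk.le) hvm⟩
  rw [hslice]
  refine isExtreme_sep_map_eq (tailProj (n m)) fun x hx => ?_
  have h := hx.2 m hm
  rw [sub_zero, ← hnorm] at h
  exact (pow_le_pow_iff_left₀ (norm_nonneg _) (norm_nonneg _) two_ne_zero).1 h

lemma faceDimSig_nestedCylinder (hn : Monotone n) (hs : StrictMonoOn n (Iic k)) (hk : n k = d) :
    faceDimSig (nestedCylinder n k (0 : EuclideanSpace ℝ (Fin d))) = n '' Iic k := by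
  ext a
  constructor
  · rintro ⟨F, hF, hne, rfl⟩
    exact hF.sdim_mem_image_of_nestedCylinder hn hk.le (map_zero _) hne
  · rintro ⟨m, hm, rfl⟩
    exact exists_isFace_nestedCylinder_sdim_eq hn hs hk hm

lemma quadRep_nestedCylinder (hk : n k = d) :
    QuadRep (nestedCylinder n k (0 : EuclideanSpace ℝ (Fin d))) k := by
  refine ⟨fun j => tailProj (n j), fun _ => 0, fun j => (j : ℝ) - k,
    fun j x => ?_, fun j x y => inner_tailProj_left, ?_⟩
  · rw [inner_tailProj_self]
    positivity
  · ext x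
    simp only [nestedCylinder, tailProj_eq_zero_of_le hk.ge, sub_zero, inner_tailProj_self,
      inner_zero_left, mul_zero, add_zero, true_and, mem_ofPred_eq]
    constructor
    · intro h j
      linarith [h j j.2]
    · intro h j hj
      linarith [h ⟨j, hj⟩]

end Faces

lemma Finset.exists_monotone_image_Iic_eq (I : Finset ℕ) (hI : I.Nonempty) :
    ∃ n : ℕ → ℕ, Monotone n ∧ StrictMonoOn n (Set.Iic (I.card - 1)) ∧
      n '' Set.Iic (I.card - 1) = I ∧ n (I.card - 1) = I.max' hI ∧ n 0 = I.min' hI := by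
  have hc : 0 < I.card := I.card_pos.2 hI
  let e := I.orderEmbOfFin rfl
  let clamp : ℕ → Fin I.card := fun j =>
    ⟨min j (I.card - 1), (min_le_right _ _).trans_lt (Nat.sub_lt hc one_pos)⟩
  have hclamp : ∀ j (hj : j ≤ I.card - 1), clamp j = ⟨j, by omega⟩ :=
    fun j hj => Fin.ext (min_eq_left hj)
  refine ⟨fun j => e (clamp j), e.monotone.comp fun a b h => ?_, fun a ha b hb h => ?_, ?_, ?_, ?_⟩
  · simp only [clamp, Fin.mk_le_mk]
    omega
  · show e (clamp a) < e (clamp b)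
    rw [hclamp a ha, hclamp b hb]
    exact e.strictMono h
  · apply Set.Subset.antisymm
    · rintro _ ⟨j, -, rfl⟩
      rw [← I.range_orderEmbOfFin rfl]
      exact Set.mem_range_self _
    · intro a ha
      rw [← I.range_orderEmbOfFin rfl] at ha
      obtain ⟨i, rfl⟩ := ha
      exact ⟨i, Set.mem_Iic.2 (by omega), by simp only [hclamp i (by omega)]; rfl⟩
  · simp only [hclamp _ le_rfl]
    exact I.orderEmbOfFin_last rfl hc
  · simp only [hclamp 0 (Nat.zero_le _)]
    exact I.orderEmbOfFin_zero rfl hc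

theorem everything_is_possible (I : Finset ℕ) (hI : I.Nonempty) :
    ∃ S : Set (EuclideanSpace ℝ (Fin (I.max' hI))),
      IsClosed S ∧ Convex ℝ S ∧ faceDimSig S = ↑I ∧
      QuadRep S (I.card - 1) ∧ (0 ∈ I → IsCompact S) := by
  obtain ⟨n, hn, hs, himage, hlast, hfirst⟩ := I.exists_monotone_image_Iic_eq hI
  refine ⟨nestedCylinder n (I.card - 1) 0, isClosed_nestedCylinder, convex_nestedCylinder, ?_,
    quadRep_nestedCylinder hlast, fun h0 => isCompact_nestedCylinder ?_⟩
  · rw [faceDimSig_nestedCylinder hn hs hlast, himage]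
  · rw [hfirst]
    exact Nat.le_zero.1 (I.min'_le 0 h0)
end

section
/- Let I = {m, m+1, …, n} be a complete set of consecutive nonnegative integers with n > m. Then the minimum number of convex quadratic inequalities whose solution set is a convex set with facial dimension signature I equals ⌈log₂(n − m + 1)⌉. -/
open Set Metric RealInnerProductSpace

variable {E : Type*} [NormedAddCommGroup E] [NormedSpace ℝ E]

/-!
For convex quadratics `q j` and `x` in `S = {x | ∀ j, q j x ≤ 0}`, let `V x` be the
intersection, over the constraints active at `x`, of the subspaces `{v | Q v = 0, ⟪a, v⟫ = 0}`.
If a convex quadratic vanishes at two points and at a point strictly between them, their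
difference lies in that subspace. Hence `{y ∈ S | y - x ∈ V x}` is a face of dimension
`dim V x`, every face arises this way, and the signature of `S` is `{dim V x | x ∈ S}`.

Lower bound: let `L` be the span of `S` (of dimension `n`) and `c j` the codimension of
`L ⊓ ker (q j)` in `L`. For `0 < s ≤ n - m`, a point with `dim V x = n - s` has active
constraints with `c j ≤ s` whose codimensions add up to at least `s`. Sorting the `c j`, each one
is then at most one more than the sum of the smaller ones, so `n - m < 2 ^ k`.

Upper bound: split the coordinates into blocks of sizes `1, 2, 4, …` (the last one truncated)
summing to `n - m`, plus `m` free coordinates, and let `q j x = x ℓ + ∑ x i ^ 2`, where `ℓ` is the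
first coordinate of the `j`-th block and `i` ranges over the rest of it. Any set of constraints
can be made exactly active, and the subset sums of the block sizes are all of `[0, n - m]`.
-/

open Filter Topology

lemma LinearMap.IsPositive.apply_eq_zero_of_inner_eq_zero {E : Type*} [NormedAddCommGroup E]
    [InnerProductSpace ℝ E] {T : E →ₗ[ℝ] E} (hT : T.IsPositive) {v : E} (hv : ⟪T v, v⟫ = 0) :
    T v = 0 := by
  have hnonneg (t : ℝ) : 0 ≤ ⟪T (T v), T v⟫ * (t * t) + 2 * ⟪T v, T v⟫ * t + 0 := by
    have := hT.inner_nonneg_left (v + t • T v)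
    simp only [map_add, map_smul, inner_add_left, inner_add_right, real_inner_smul_left,
      real_inner_smul_right, hv, hT.isSymmetric (T v) v] at this
    linarith
  have := discrim_le_zero hnonneg
  rw [discrim] at this
  exact real_inner_self_nonpos.mp (by nlinarith)

lemma ConvexOn.isExtreme_sublevel_levelSet {E : Type*} [AddCommGroup E] [Module ℝ E] {f : E → ℝ}
    (hf : ConvexOn ℝ univ f) (c : ℝ) : IsExtreme ℝ {x | f x ≤ c} {x | f x = c} := by
  refine ⟨fun x hx => le_of_eq hx,
    fun x (hx : f x ≤ c) y (hy : f y ≤ c) z (hz : f z = c) hseg => ?_⟩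
  obtain ⟨s, t, hs, ht, hst, rfl⟩ := hseg
  have hconv := hf.2 (mem_univ x) (mem_univ y) hs.le ht.le hst
  rw [smul_eq_mul, smul_eq_mul, hz] at hconv
  have hty := mul_le_mul_of_nonneg_left hy ht.le
  have hc : (s + t) * c = c := by rw [hst, one_mul]
  have : s * c ≤ s * f x := by linarith
  exact le_antisymm hx (le_of_mul_le_mul_left this hs)

structure ConvexQuadratic (E : Type*) [NormedAddCommGroup E] [InnerProductSpace ℝ E] where
  Q : E →ₗ[ℝ] E
  a : E
  α : ℝ
  isPositive : Q.IsPositive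

namespace ConvexQuadratic

variable {E : Type*} [NormedAddCommGroup E] [InnerProductSpace ℝ E]

@[coe] noncomputable def toFun (q : ConvexQuadratic E) (x : E) : ℝ :=
  ⟪q.Q x, x⟫ + 2 * ⟪q.a, x⟫ + q.α

noncomputable instance : CoeFun (ConvexQuadratic E) (fun _ => E → ℝ) := ⟨toFun⟩

variable (q : ConvexQuadratic E)

lemma apply_def (x : E) : q x = ⟪q.Q x, x⟫ + 2 * ⟪q.a, x⟫ + q.α := rfl

noncomputable def ker : Submodule ℝ E := LinearMap.ker q.Q ⊓ (ℝ ∙ q.a)ᗮ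

lemma mem_ker {v : E} : v ∈ q.ker ↔ q.Q v = 0 ∧ ⟪q.a, v⟫ = 0 := by
  rw [ker, Submodule.mem_inf, LinearMap.mem_ker, Submodule.mem_orthogonal_singleton_iff_inner_right]

lemma apply_add_smul (x u : E) (t : ℝ) :
    q (x + t • u) = q x + 2 * t * (⟪q.Q x, u⟫ + ⟪q.a, u⟫) + t ^ 2 * ⟪q.Q u, u⟫ := by
  have hsymm : ⟪q.Q u, x⟫ = ⟪q.Q x, u⟫ := by
    rw [q.isPositive.isSymmetric u x, real_inner_comm]
  simp only [apply_def, map_add, map_smul, inner_add_left, inner_add_right,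
    real_inner_smul_left, real_inner_smul_right, hsymm]
  ring

lemma apply_add_of_mem_ker (x : E) {v : E} (hv : v ∈ q.ker) : q (x + v) = q x := by
  rw [mem_ker] at hv
  simpa [hv.1, hv.2, q.isPositive.isSymmetric x v] using q.apply_add_smul x v 1

lemma convexOn : ConvexOn ℝ univ q := by
  refine ⟨convex_univ, fun x _ y _ s t hs ht hst => ?_⟩
  obtain rfl : s = 1 - t := by linarith
  have hxy : (1 - t) • x + t • y = x + t • (y - x) := by module
  have hqy := q.apply_add_smul x (y - x) 1
  rw [one_smul, add_sub_cancel] at hqy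
  rw [hxy, q.apply_add_smul, smul_eq_mul, smul_eq_mul, hqy]
  nlinarith [q.isPositive.inner_nonneg_left (y - x), mul_nonneg hs ht]

lemma continuous [FiniteDimensional ℝ E] : Continuous q := by
  have := q.Q.continuous_of_finiteDimensional
  unfold toFun
  fun_prop

lemma sub_mem_ker_of_mem_openSegment {x y w : E} (hx : q x = 0) (hy : q y = 0)
    (hw : w ∈ openSegment ℝ x y) (hqw : q w = 0) : y - x ∈ q.ker := by
  rw [openSegment_eq_image'] at hw
  obtain ⟨t, ⟨ht0, ht1⟩, rfl⟩ := hw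
  have hqt := q.apply_add_smul x (y - x) t
  have hq1 := q.apply_add_smul x (y - x) 1
  rw [one_smul, add_sub_cancel, hy, hx] at hq1
  rw [hqw, hx] at hqt
  have hQ : ⟪q.Q (y - x), y - x⟫ = 0 := by nlinarith [mul_pos ht0 (sub_pos.2 ht1)]
  have hQ0 := q.isPositive.apply_eq_zero_of_inner_eq_zero hQ
  rw [q.isPositive.isSymmetric x, hQ0, inner_zero_right, inner_zero_left] at hq1
  exact q.mem_ker.2 ⟨hQ0, by linarith⟩

lemma eq_zero_and_sub_mem_ker_of_mem_openSegment {y z w : E} (hy : q y ≤ 0) (hz : q z ≤ 0)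
    (hw : w ∈ openSegment ℝ y z) (hqw : q w = 0) : q y = 0 ∧ q z = 0 ∧ z - y ∈ q.ker := by
  have hext := q.convexOn.isExtreme_sublevel_levelSet 0
  have hqy : q y = 0 := hext.left_mem_of_mem_openSegment hy hz hqw hw
  have hqz : q z = 0 := hext.right_mem_of_mem_openSegment hy hz hqw hw
  exact ⟨hqy, hqz, q.sub_mem_ker_of_mem_openSegment hqy hqz hw hqw⟩

end ConvexQuadratic

lemma vectorSpan_le_of_forall_sub_mem {E : Type*} [AddCommGroup E] [Module ℝ E]
    {V : Submodule ℝ E} {F : Set E} {x : E} (hx : x ∈ F) (h : ∀ y ∈ F, y - x ∈ V) :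
    vectorSpan ℝ F ≤ V := by
  rw [vectorSpan_eq_span_vsub_set_right ℝ hx, Submodule.span_le]
  rintro _ ⟨y, hy, rfl⟩
  exact h y hy

lemma le_vectorSpan_of_eventually_add_mem {E : Type*} [NormedAddCommGroup E] [NormedSpace ℝ E]
    {V : Submodule ℝ E} {F : Set E} {x : E} (hx : x ∈ F)
    (h : ∀ᶠ v in 𝓝 0, v ∈ V → x + v ∈ F) : V ≤ vectorSpan ℝ F := by
  intro v hv
  have hsmul : Tendsto (fun t : ℝ => t • v) (𝓝[≠] 0) (𝓝 0) :=
    ((continuous_id.smul continuous_const).tendsto' 0 0 (zero_smul ℝ v)).mono_left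
      nhdsWithin_le_nhds
  obtain ⟨t, hxt, ht⟩ :=
    ((hsmul.eventually h).and self_mem_nhdsWithin).exists
  have hmem : t • v ∈ vectorSpan ℝ F := by
    simpa using vsub_mem_vectorSpan ℝ (hxt (V.smul_mem t hv)) hx
  exact (Submodule.smul_mem_iff _ ht).1 hmem

lemma sdim_eq_finrank {E : Type*} [NormedAddCommGroup E] [NormedSpace ℝ E]
    {V : Submodule ℝ E} {F : Set E} {x : E} (hx : x ∈ F)
    (h_add : ∀ᶠ v in 𝓝 0, v ∈ V → x + v ∈ F) (h_sub : ∀ y ∈ F, y - x ∈ V) :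
    sdim F = Module.finrank ℝ V := by
  rw [sdim, direction_affineSpan,
    le_antisymm (vectorSpan_le_of_forall_sub_mem hx h_sub)
      (le_vectorSpan_of_eventually_add_mem hx h_add)]

section SolutionSet

variable {E : Type*} [NormedAddCommGroup E] [InnerProductSpace ℝ E] {ι : Type*}
  (q : ι → ConvexQuadratic E)

def solutionSet : Set E := {x | ∀ j, q j x ≤ 0}

def activeSet (x : E) : Set ι := {j | q j x = 0}

noncomputable def activeKer (x : E) : Submodule ℝ E := ⨅ j ∈ activeSet q x, (q j).ker

variable {q}

lemma mem_activeKer {x v : E} : v ∈ activeKer q x ↔ ∀ j, q j x = 0 → v ∈ (q j).ker := by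
  simp only [activeKer, Submodule.mem_iInf]
  rfl

lemma convex_solutionSet : Convex ℝ (solutionSet q) := by
  have : solutionSet q = ⋂ j, {x | q j x ≤ 0} := by ext; simp [solutionSet]
  rw [this]
  exact convex_iInter fun j => by simpa using (q j).convexOn.convex_le 0

lemma eventually_add_mem_solutionSet [Finite ι] [FiniteDimensional ℝ E] {x : E}
    (hx : x ∈ solutionSet q) :
    ∀ᶠ v in 𝓝 0, v ∈ activeKer q x → x + v ∈ solutionSet q := by
  have : ∀ j, ∀ᶠ v in 𝓝 (0 : E), v ∈ activeKer q x → q j (x + v) ≤ 0 := by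
    intro j
    by_cases hj : q j x = 0
    · refine Eventually.of_forall fun v hv => ?_
      rw [(q j).apply_add_of_mem_ker x (mem_activeKer.1 hv j hj), hj]
    · have hcont : ContinuousAt (fun v => q j (x + v)) 0 :=
        ((q j).continuous.comp (continuous_const.add continuous_id)).continuousAt
      filter_upwards [hcont.eventually_lt continuousAt_const
        (by simpa using lt_of_le_of_ne (hx j) hj)] with v hv _
      exact hv.le
  filter_upwards [eventually_all.2 this] with v hv hvV j using hv j hvV

end SolutionSet

section FaceDimSig

variable {E : Type*} [NormedAddCommGroup E] [InnerProductSpace ℝ E] [FiniteDimensional ℝ E]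
  {ι : Type*} [Finite ι] {q : ι → ConvexQuadratic E}

lemma finrank_activeKer_mem_faceDimSig {x : E} (hx : x ∈ solutionSet q) :
    Module.finrank ℝ (activeKer q x) ∈ faceDimSig (solutionSet q) := by
  set V := activeKer q x
  set F := {y ∈ solutionSet q | y - x ∈ V}
  have hconv : Convex ℝ F := by
    refine fun y hy z hz s t hs ht hst => ⟨convex_solutionSet hy.1 hz.1 hs ht hst, ?_⟩
    have : s • y + t • z - x = s • (y - x) + t • (z - x) := by
      obtain rfl : s = 1 - t := by linarith
      module
    rw [this]
    exact V.add_mem (V.smul_mem s hy.2) (V.smul_mem t hz.2)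
  have hext : IsExtreme ℝ (solutionSet q) F := by
    refine ⟨fun y hy => hy.1, fun y hy z hz w hwF hw => ⟨hy, ?_⟩⟩
    have hzy : z - y ∈ V := mem_activeKer.2 fun j hj => by
      have hqw : q j w = 0 := by
        rw [← add_sub_cancel x w, (q j).apply_add_of_mem_ker x (mem_activeKer.1 hwF.2 j hj), hj]
      exact ((q j).eq_zero_and_sub_mem_ker_of_mem_openSegment (hy j) (hz j) hw hqw).2.2
    rw [openSegment_eq_image'] at hw
    obtain ⟨t, -, rfl⟩ := hw
    have : y - x = (y + t • (z - y) - x) - t • (z - y) := by abel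
    rw [this]
    exact V.sub_mem hwF.2 (V.smul_mem t hzy)
  have hadd : ∀ᶠ v in 𝓝 0, v ∈ V → x + v ∈ F := by
    filter_upwards [eventually_add_mem_solutionSet hx] with v hv hvV
    exact ⟨hv hvV, by simpa using hvV⟩
  exact ⟨F, ⟨hconv, hext⟩, ⟨x, hx, by simp⟩, sdim_eq_finrank ⟨hx, by simp⟩ hadd fun y hy => hy.2⟩

lemma exists_finrank_activeKer_eq {d : ℕ} (hd : d ∈ faceDimSig (solutionSet q)) :
    ∃ x ∈ solutionSet q, Module.finrank ℝ (activeKer q x) = d := by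
  obtain ⟨F, ⟨hconv, hext⟩, hne, rfl⟩ := hd
  -- a point of `F` whose set of active constraints is minimal is active only where every point
  -- of `F` is, since a point strictly between it and another point of `F` is active at most there
  obtain ⟨x, hxF, hmin⟩ := exists_minimalFor_of_wellFoundedLT (· ∈ F) (activeSet q) hne
  have hsub : ∀ y ∈ F, y - x ∈ activeKer q x := by
    intro y hy
    have hw := midpoint_mem_openSegment (𝕜 := ℝ) x y
    have key := fun j (hj : q j (midpoint ℝ x y) = 0) =>
      (q j).eq_zero_and_sub_mem_ker_of_mem_openSegment (hext.subset hxF j) (hext.subset hy j) hw hj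
    have hact := hmin (hconv.openSegment_subset hxF hy hw) fun j hj => (key j hj).1
    exact mem_activeKer.2 fun j hj => (key j (hact hj)).2.2
  have hadd : ∀ᶠ v in 𝓝 0, v ∈ activeKer q x → x + v ∈ F := by
    have h := eventually_add_mem_solutionSet (hext.subset hxF)
    filter_upwards [h, (continuous_neg.tendsto' (0 : E) 0 neg_zero).eventually h]
      with v hplus hminus hv
    refine hext.right_mem_of_mem_openSegment (hminus (neg_mem hv)) (hplus hv) hxF ?_
    exact ⟨1 / 2, 1 / 2, by norm_num, by norm_num, by norm_num, by module⟩
  exact ⟨x, hext.subset hxF, (sdim_eq_finrank hxF hadd hsub).symm⟩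

theorem faceDimSig_solutionSet :
    faceDimSig (solutionSet q) = (fun x => Module.finrank ℝ (activeKer q x)) '' solutionSet q := by
  ext d
  refine ⟨exists_finrank_activeKer_eq, ?_⟩
  rintro ⟨x, hx, rfl⟩
  exact finrank_activeKer_mem_faceDimSig hx

end FaceDimSig

lemma Fin.sum_filter_val_lt_succ {M : Type*} [AddCommMonoid M] {k j : ℕ} (c : Fin k → M)
    (hj : j < k) :
    ∑ i : Fin k with i.val < j + 1, c i = ∑ i : Fin k with i.val < j, c i + c ⟨j, hj⟩ := by
  have : ({i | i.val < j + 1} : Finset (Fin k)) = insert ⟨j, hj⟩ ({i | i.val < j} : Finset _) := by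
    ext i
    simp only [Finset.mem_filter, Finset.mem_univ, true_and, Finset.mem_insert, Fin.ext_iff]
    omega
  rw [this, Finset.sum_insert (by simp), add_comm]

def CoversUpTo {ι : Type*} (c : ι → ℕ) (g : ℕ) : Prop :=
  ∀ s, 0 < s → s ≤ g → ∃ T : Finset ι, (∀ i ∈ T, c i ≤ s) ∧ s ≤ ∑ i ∈ T, c i

namespace CoversUpTo

variable {ι : Type*} {c : ι → ℕ} {g : ℕ}

lemma comp_equiv {ι' : Type*} (h : CoversUpTo c g) (e : ι' ≃ ι) : CoversUpTo (c ∘ e) g := by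
  intro s hs hsg
  obtain ⟨T, hTle, hTsum⟩ := h s hs hsg
  refine ⟨T.map e.symm.toEmbedding, fun i hi => ?_, ?_⟩
  · obtain ⟨j, hj, rfl⟩ := Finset.mem_map.1 hi
    simpa using hTle j hj
  · simpa using hTsum

lemma le_sum_filter_lt_add_one_of_monotone {k : ℕ} {c : Fin k → ℕ} (hc : Monotone c)
    (h : CoversUpTo c g) {j : ℕ} (hj : j < k) (hg : ∑ i : Fin k with i.val < j, c i < g) :
    c ⟨j, hj⟩ ≤ ∑ i : Fin k with i.val < j, c i + 1 := by
  obtain ⟨T, hTle, hTsum⟩ := h _ (Nat.succ_pos _) hg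
  obtain ⟨i, hiT, hji⟩ : ∃ i ∈ T, j ≤ (i : ℕ) := by
    by_contra! hT
    have : ∑ i ∈ T, c i ≤ ∑ i : Fin k with i.val < j, c i :=
      Finset.sum_le_sum_of_subset fun i hi => by simpa using hT i hi
    omega
  exact (hc (Fin.mk_le_of_le_val hji)).trans (hTle i hiT)

lemma lt_two_pow_of_monotone {k : ℕ} {c : Fin k → ℕ} (hc : Monotone c) (h : CoversUpTo c g) :
    g < 2 ^ k := by
  have hprefix : ∀ j ≤ k, min (∑ i : Fin k with i.val < j, c i) g < 2 ^ j := by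
    intro j
    induction j with
    | zero => intro _; simp
    | succ j ih =>
      intro hjk
      have hpj := ih (Nat.le_of_succ_le hjk)
      rw [Fin.sum_filter_val_lt_succ c hjk, pow_succ]
      rcases le_or_gt g (∑ i : Fin k with i.val < j, c i) with hg | hg
      · omega
      · have := h.le_sum_filter_lt_add_one_of_monotone hc hjk hg
        omega
  rcases Nat.eq_zero_or_pos g with rfl | hg
  · exact Nat.two_pow_pos k
  obtain ⟨T, -, hTsum⟩ := h g hg le_rfl
  have : ∑ i ∈ T, c i ≤ ∑ i : Fin k with i.val < k, c i :=
    Finset.sum_le_sum_of_subset fun i _ => by simp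
  have := hprefix k le_rfl
  omega

lemma lt_two_pow_card [Fintype ι] (h : CoversUpTo c g) : g < 2 ^ Fintype.card ι := by
  set c' := c ∘ (Fintype.equivFin ι).symm
  exact ((h.comp_equiv _).comp_equiv (Tuple.sort c')).lt_two_pow_of_monotone
    (Tuple.monotone_sort c')

end CoversUpTo

lemma finrank_sub_finrank_inf_finsetInf_le {K V ι : Type*} [DivisionRing K] [AddCommGroup V]
    [Module K V] [FiniteDimensional K V] (L : Submodule K V) (W : ι → Submodule K V)
    (T : Finset ι) :
    Module.finrank K L - Module.finrank K ↥(L ⊓ T.inf W) ≤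
      ∑ j ∈ T, (Module.finrank K L - Module.finrank K ↥(L ⊓ W j)) := by
  classical
  induction T using Finset.induction_on with
  | empty => rw [Finset.inf_empty, inf_top_eq, Nat.sub_self]; exact Nat.zero_le _
  | insert a T ha ih =>
    rw [Finset.inf_insert, inf_inf_distrib_left, Finset.sum_insert ha]
    have hdim := Submodule.finrank_sup_add_finrank_inf_eq (L ⊓ W a) (L ⊓ T.inf W)
    have hsup : Module.finrank K ↥(L ⊓ W a ⊔ L ⊓ T.inf W) ≤ Module.finrank K L :=
      Submodule.finrank_mono (sup_le inf_le_left inf_le_left)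
    omega

section LowerBound

variable {E : Type*} [NormedAddCommGroup E] [InnerProductSpace ℝ E] [FiniteDimensional ℝ E]
  {ι : Type*} {q : ι → ConvexQuadratic E}

lemma activeKer_le_vectorSpan [Finite ι] {x : E} (hx : x ∈ solutionSet q) :
    activeKer q x ≤ vectorSpan ℝ (solutionSet q) :=
  le_vectorSpan_of_eventually_add_mem hx (eventually_add_mem_solutionSet hx)

lemma finrank_vectorSpan_solutionSet [Finite ι] {m n : ℕ} (hmn : m ≤ n)
    (h : faceDimSig (solutionSet q) = Icc m n) :
    Module.finrank ℝ (vectorSpan ℝ (solutionSet q)) = n := by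
  have hn : n ∈ faceDimSig (solutionSet q) := by rw [h]; exact right_mem_Icc.2 hmn
  obtain ⟨x, hx, hxn⟩ := exists_finrank_activeKer_eq hn
  have hS : sdim (solutionSet q) ∈ faceDimSig (solutionSet q) :=
    ⟨_, ⟨convex_solutionSet, IsExtreme.rfl⟩, ⟨x, hx⟩, rfl⟩
  rw [h, sdim, direction_affineSpan] at hS
  exact le_antisymm hS.2 (hxn ▸ Submodule.finrank_mono (activeKer_le_vectorSpan hx))

lemma coversUpTo_of_faceDimSig_eq_Icc [Fintype ι] {m n : ℕ} (hmn : m ≤ n)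
    (h : faceDimSig (solutionSet q) = Icc m n) :
    CoversUpTo (fun j => n - Module.finrank ℝ ↥(vectorSpan ℝ (solutionSet q) ⊓ (q j).ker))
      (n - m) := by
  classical
  set L := vectorSpan ℝ (solutionSet q)
  have hL := finrank_vectorSpan_solutionSet hmn h
  intro s hs hsg
  have hd : n - s ∈ faceDimSig (solutionSet q) := by rw [h]; exact ⟨by omega, by omega⟩
  obtain ⟨x, hx, hxd⟩ := exists_finrank_activeKer_eq hd
  have hVL := activeKer_le_vectorSpan hx
  set T := Finset.univ.filter fun j => q j x = 0
  have hT : T.inf (fun j => (q j).ker) = activeKer q x := by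
    ext v
    simp [T, Submodule.mem_finsetInf, mem_activeKer]
  refine ⟨T, fun j hj => ?_, ?_⟩
  · have : activeKer q x ≤ L ⊓ (q j).ker :=
      le_inf hVL (hT ▸ Finset.inf_le hj)
    have := Submodule.finrank_mono this
    dsimp only
    omega
  · have := finrank_sub_finrank_inf_finsetInf_le L (fun j => (q j).ker) T
    rw [hT, inf_eq_right.2 hVL, hL, hxd] at this
    dsimp only
    omega

theorem lt_two_pow_of_faceDimSig_eq_Icc [Fintype ι] {m n : ℕ} (hmn : m ≤ n)
    (h : faceDimSig (solutionSet q) = Icc m n) : n - m < 2 ^ Fintype.card ι :=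
  (coversUpTo_of_faceDimSig_eq_Icc hmn h).lt_two_pow_card

end LowerBound

lemma quadRep_iff {N k : ℕ} {S : Set (EuclideanSpace ℝ (Fin N))} :
    QuadRep S k ↔ ∃ q : Fin k → ConvexQuadratic (EuclideanSpace ℝ (Fin N)), S = solutionSet q := by
  constructor
  · rintro ⟨Q, a, α, hpos, hsymm, rfl⟩
    exact ⟨fun j => ⟨Q j, a j, α j, (LinearMap.isPositive_iff _).2 ⟨hsymm j, hpos j⟩⟩, rfl⟩
  · rintro ⟨q, rfl⟩
    exact ⟨fun j => (q j).Q, fun j => (q j).a, fun j => (q j).α,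
      fun j => (q j).isPositive.inner_nonneg_left, fun j => (q j).isPositive.isSymmetric, rfl⟩

section CoordinateBlocks

variable {ι : Type*}

noncomputable def coordKer (A : Finset ι) : Submodule ℝ (EuclideanSpace ℝ ι) :=
  ⨅ i ∈ A, LinearMap.ker (EuclideanSpace.projₗ i)

lemma mem_coordKer {A : Finset ι} {v : EuclideanSpace ℝ ι} : v ∈ coordKer A ↔ ∀ i ∈ A, v i = 0 := by
  simp [coordKer, Submodule.mem_iInf]

lemma finrank_coordKer [Fintype ι] (A : Finset ι) :
    Module.finrank ℝ (coordKer A) = Fintype.card ι - A.card := by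
  classical
  let restrict : EuclideanSpace ℝ ι →ₗ[ℝ] (A → ℝ) :=
    LinearMap.pi fun i => EuclideanSpace.projₗ (i : ι)
  have hker : LinearMap.ker restrict = coordKer A := by
    ext v
    simp [restrict, LinearMap.ker_pi, coordKer, Submodule.mem_iInf]
  have hsurj : Function.Surjective restrict := fun u =>
    ⟨WithLp.toLp 2 fun i => if h : i ∈ A then u ⟨i, h⟩ else 0, by ext i; simp [restrict]⟩
  have := LinearMap.finrank_range_add_finrank_ker restrict
  rw [hker, LinearMap.range_eq_top.2 hsurj, finrank_top, Module.finrank_fintype_fun_eq_card,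
    Fintype.card_coe, finrank_euclideanSpace] at this
  omega

variable [Fintype ι] [DecidableEq ι]

noncomputable def ConvexQuadratic.block (B : Finset ι) (ℓ : ι) :
    ConvexQuadratic (EuclideanSpace ℝ ι) where
  Q := (Matrix.diagonal fun i => if i ∈ B.erase ℓ then (1 : ℝ) else 0).toEuclideanLin
  a := (2⁻¹ : ℝ) • EuclideanSpace.single ℓ 1
  α := 0
  isPositive := Matrix.isPositive_toEuclideanLin_iff.2 <|
    Matrix.PosSemidef.diagonal fun i => by dsimp only; split_ifs <;> norm_num

namespace ConvexQuadratic

variable {B : Finset ι} {ℓ : ι}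

lemma block_Q_apply (x : EuclideanSpace ℝ ι) (i : ι) :
    (block B ℓ).Q x i = if i ∈ B.erase ℓ then x i else 0 := by
  simp [block, Matrix.toLpLin_apply, Matrix.mulVec_diagonal]

lemma inner_block_Q_self (x : EuclideanSpace ℝ ι) :
    ⟪(block B ℓ).Q x, x⟫ = ∑ i ∈ B.erase ℓ, x i ^ 2 := by
  rw [PiLp.inner_apply]
  calc ∑ i, ⟪(block B ℓ).Q x i, x i⟫ = ∑ i, if i ∈ B.erase ℓ then x i ^ 2 else 0 :=
        Finset.sum_congr rfl fun i _ => by rw [block_Q_apply]; split_ifs <;> simp [sq]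
    _ = ∑ i ∈ B.erase ℓ, x i ^ 2 := by rw [Finset.sum_ite_mem, Finset.univ_inter]

lemma inner_block_a (x : EuclideanSpace ℝ ι) : ⟪(block B ℓ).a, x⟫ = x ℓ / 2 := by
  simp [block, real_inner_smul_left, EuclideanSpace.inner_single_left, div_eq_inv_mul]

lemma block_apply (x : EuclideanSpace ℝ ι) : block B ℓ x = ∑ i ∈ B.erase ℓ, x i ^ 2 + x ℓ := by
  rw [apply_def, inner_block_Q_self, inner_block_a]
  simp only [block]
  ring

lemma ker_block (hℓ : ℓ ∈ B) : (block B ℓ).ker = coordKer B := by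
  ext v
  rw [mem_ker, mem_coordKer, inner_block_a]
  constructor
  · rintro ⟨hQ, ha⟩ i hi
    rcases eq_or_ne i ℓ with rfl | hiℓ
    · linarith
    · simpa [block_Q_apply, hiℓ, hi] using congrArg (· i) hQ
  · intro h
    refine ⟨?_, by rw [h ℓ hℓ, zero_div]⟩
    ext i
    rw [block_Q_apply]
    split_ifs with hi
    exacts [h i (Finset.mem_of_mem_erase hi), rfl]

end ConvexQuadratic

end CoordinateBlocks

section BlockFamily

open ConvexQuadratic

variable {ι κ : Type*} [Fintype ι] [DecidableEq ι] [Fintype κ] {B : κ → Finset ι} {ℓ : κ → ι}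

lemma finrank_activeKer_block (hB : Pairwise fun j j' => Disjoint (B j) (B j'))
    (hℓ : ∀ j, ℓ j ∈ B j) (x : EuclideanSpace ℝ ι) :
    Module.finrank ℝ (activeKer (fun j => block (B j) (ℓ j)) x) =
      Fintype.card ι - ∑ j with block (B j) (ℓ j) x = 0, (B j).card := by
  have : activeKer (fun j => block (B j) (ℓ j)) x =
      coordKer (({j | block (B j) (ℓ j) x = 0} : Finset κ).biUnion B) := by
    ext v
    simp only [mem_activeKer, ker_block (hℓ _), mem_coordKer, Finset.mem_biUnion,
      Finset.mem_filter, Finset.mem_univ, true_and]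
    grind
  rw [this, finrank_coordKer, Finset.card_biUnion (hB.set_pairwise _)]

lemma exists_mem_solutionSet_block_active_eq (hB : Pairwise fun j j' => Disjoint (B j) (B j'))
    (hℓ : ∀ j, ℓ j ∈ B j) (T : Finset κ) :
    ∃ x ∈ solutionSet fun j => block (B j) (ℓ j),
      ({j | block (B j) (ℓ j) x = 0} : Finset κ) = T := by
  classical
  have hℓ_mem {j j' : κ} (h : ℓ j' ∈ B j) : j' = j :=
    Set.PairwiseDisjoint.elim_finset (hB.set_pairwise univ) (mem_univ _) (mem_univ _) _ (hℓ j') h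
  set x : EuclideanSpace ℝ ι := WithLp.toLp 2 fun i => if i ∈ Tᶜ.image ℓ then -1 else 0
  have hx (j : κ) : block (B j) (ℓ j) x = if j ∈ T then 0 else -1 := by
    rw [block_apply, Finset.sum_eq_zero, zero_add]
    · by_cases hj : j ∈ T
      · simp only [x, hj, if_true, Finset.mem_image, Finset.mem_compl]
        rw [if_neg]
        rintro ⟨j', hj', hℓj'⟩
        exact hj' (hℓ_mem (hℓj' ▸ hℓ j) ▸ hj)
      · simp only [x, hj, if_false, Finset.mem_image, Finset.mem_compl]
        rw [if_pos ⟨j, hj, rfl⟩]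
    · intro i hi
      simp only [x, Finset.mem_image, Finset.mem_compl]
      rw [if_neg, sq, mul_zero]
      rintro ⟨j', -, rfl⟩
      exact Finset.ne_of_mem_erase hi (congrArg ℓ (hℓ_mem (Finset.mem_of_mem_erase hi)))
  refine ⟨x, fun j => by rw [hx]; split_ifs <;> norm_num, ?_⟩
  ext j
  simp [hx]

theorem faceDimSig_solutionSet_block (hB : Pairwise fun j j' => Disjoint (B j) (B j'))
    (hℓ : ∀ j, ℓ j ∈ B j) :
    faceDimSig (solutionSet fun j => block (B j) (ℓ j)) =
      range fun T : Finset κ => Fintype.card ι - ∑ j ∈ T, (B j).card := by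
  rw [faceDimSig_solutionSet]
  ext d
  constructor
  · rintro ⟨x, -, rfl⟩
    exact ⟨_, (finrank_activeKer_block hB hℓ x).symm⟩
  · rintro ⟨T, rfl⟩
    obtain ⟨x, hx, hxT⟩ := exists_mem_solutionSet_block_active_eq hB hℓ T
    exact ⟨x, hx, by dsimp only; rw [finrank_activeKer_block hB hℓ, hxT]⟩

end BlockFamily

theorem exists_faceDimSig_solutionSet_eq {k : ℕ} (b : Fin k → ℕ) (hb : ∀ j, 0 < b j) (m : ℕ) :
    ∃ q : Fin k → ConvexQuadratic (EuclideanSpace ℝ (Fin (∑ j, b j + m))),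
      faceDimSig (solutionSet q) = range fun T : Finset (Fin k) => ∑ j, b j + m - ∑ j ∈ T, b j := by
  let e : (Σ j, Fin (b j)) ⊕ Fin m ≃ Fin (∑ j, b j + m) :=
    (Equiv.sumCongr finSigmaFinEquiv (Equiv.refl _)).trans finSumFinEquiv
  let B (j : Fin k) : Finset (Fin (∑ j, b j + m)) :=
    Finset.univ.map ⟨fun t => e (.inl ⟨j, t⟩), fun t t' h => by simpa using e.injective h⟩
  have hB : Pairwise fun j j' => Disjoint (B j) (B j') := by
    intro j j' hne
    simp only [B, Finset.disjoint_left, Finset.mem_map, Finset.mem_univ, true_and, not_exists]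
    rintro _ ⟨t, rfl⟩ t' h
    have := e.injective h
    simp only [Sum.inl.injEq, Sigma.mk.injEq] at this
    exact hne this.1.symm
  let ℓ (j : Fin k) := e (.inl ⟨j, ⟨0, hb j⟩⟩)
  have hℓ (j : Fin k) : ℓ j ∈ B j := Finset.mem_map.2 ⟨⟨0, hb j⟩, Finset.mem_univ _, rfl⟩
  refine ⟨fun j => .block (B j) (ℓ j), ?_⟩
  rw [faceDimSig_solutionSet_block hB hℓ]
  simp [B]

lemma exists_subset_sum_eq {b : ℕ → ℕ} {k : ℕ} (hb : ∀ j < k, b j ≤ ∑ i ∈ Finset.range j, b i + 1)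
    {s : ℕ} (hs : s ≤ ∑ i ∈ Finset.range k, b i) : ∃ T ⊆ Finset.range k, ∑ i ∈ T, b i = s := by
  induction k generalizing s with
  | zero => exact ⟨∅, by simp, by simp at hs; simp [hs]⟩
  | succ k ih =>
    rw [Finset.sum_range_succ] at hs
    have hbk := hb k k.lt_succ_self
    have hb' : ∀ j < k, b j ≤ ∑ i ∈ Finset.range j, b i + 1 := fun j hj => hb j (by omega)
    by_cases hsk : s ≤ ∑ i ∈ Finset.range k, b i
    · obtain ⟨T, hT, hTs⟩ := ih hb' hsk
      exact ⟨T, hT.trans (Finset.range_subset_range.2 k.le_succ), hTs⟩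
    · obtain ⟨T, hT, hTs⟩ := ih hb' (s := s - b k) (by omega)
      refine ⟨insert k T, Finset.insert_subset (by simp) (hT.trans (by simp)), ?_⟩
      rw [Finset.sum_insert fun hk => by simpa using hT hk]
      omega

lemma exists_pos_sizes_subset_sums (g : ℕ) :
    ∃ b : Fin (Nat.clog 2 (g + 1)) → ℕ, (∀ j, 0 < b j) ∧ ∑ j, b j = g ∧
      ∀ s ≤ g, ∃ T : Finset (Fin (Nat.clog 2 (g + 1))), ∑ j ∈ T, b j = s := by
  set k := Nat.clog 2 (g + 1)
  -- blocks of sizes `1, 2, 4, …`, the last one truncated so that the sizes add up to `g`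
  set σ : ℕ → ℕ := fun j => min (2 ^ j - 1) g
  have hσ : Monotone σ := fun i j hij =>
    min_le_min_right _ (Nat.sub_le_sub_right (Nat.pow_le_pow_right two_pos hij) 1)
  set c : ℕ → ℕ := fun j => σ (j + 1) - σ j
  have hsum (j : ℕ) : ∑ i ∈ Finset.range j, c i = σ j := by
    rw [Finset.sum_range_tsub hσ]
    simp [σ]
  have hσk : σ k = g := by
    have : g + 1 ≤ 2 ^ k := Nat.le_pow_clog one_lt_two _
    simp only [σ]
    omega
  refine ⟨fun j => c j, fun j => ?_, by rw [Fin.sum_univ_eq_sum_range c k, hsum, hσk], ?_⟩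
  · show 0 < c j
    have := Nat.pow_lt_of_lt_clog j.isLt
    have := Nat.one_le_two_pow (n := j)
    simp only [c, σ, pow_succ]
    omega
  · intro s hs
    have hc : ∀ j < k, c j ≤ ∑ i ∈ Finset.range j, c i + 1 := fun j _ => by
      rw [hsum]
      simp only [c, σ, pow_succ]
      omega
    obtain ⟨T, hT, hTs⟩ := exists_subset_sum_eq hc (s := s) (by rwa [hsum, hσk])
    refine ⟨T.preimage Fin.val Fin.val_injective.injOn, ?_⟩
    rw [Finset.sum_preimage _ _ _ c fun i hi hne => absurd ⟨⟨i, by simpa using hT hi⟩, rfl⟩ hne,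
      hTs]

theorem exists_quadRep_faceDimSig_eq_Icc {m n : ℕ} (hmn : m ≤ n) :
    ∃ (N : ℕ) (S : Set (EuclideanSpace ℝ (Fin N))),
      Convex ℝ S ∧ QuadRep S (Nat.clog 2 (n - m + 1)) ∧ faceDimSig S = Icc m n := by
  obtain ⟨b, hb, hbsum, hbsub⟩ := exists_pos_sizes_subset_sums (n - m)
  obtain ⟨q, hq⟩ := exists_faceDimSig_solutionSet_eq b hb m
  refine ⟨_, solutionSet q, convex_solutionSet, quadRep_iff.2 ⟨q, rfl⟩, ?_⟩
  rw [hq]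
  ext d
  constructor
  · rintro ⟨T, rfl⟩
    have : ∑ j ∈ T, b j ≤ ∑ j, b j := Finset.sum_le_sum_of_subset (Finset.subset_univ T)
    dsimp only
    exact ⟨by omega, by omega⟩
  · rintro ⟨hmd, hdn⟩
    obtain ⟨T, hT⟩ := hbsub (n - d) (by omega)
    exact ⟨T, by dsimp only; omega⟩

theorem optimal_complete (m n : ℕ) (hmn : m < n) :
    IsLeast {k : ℕ | ∃ (N : ℕ) (S : Set (EuclideanSpace ℝ (Fin N))),
        Convex ℝ S ∧ QuadRep S k ∧ faceDimSig S = Set.Icc m n}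
      (Nat.clog 2 (n - m + 1)) := by
  refine ⟨exists_quadRep_faceDimSig_eq_Icc hmn.le, ?_⟩
  rintro k ⟨N, S, -, hS, hsig⟩
  obtain ⟨q, rfl⟩ := quadRep_iff.1 hS
  have := lt_two_pow_of_faceDimSig_eq_Icc hmn.le hsig
  rw [Fintype.card_fin] at this
  exact Nat.clog_le_of_le_pow (by omega)
end
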